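/- arXiv:0909.3086 — 2 statements merged into one kernel-verified Lean document; each statement's English description precedes it below -/
import Mathlib

section
/- Suppose f_k → f uniformly in L(HE,p), m ≥ 0, and for each k the set T_k = {0 = t₀^k < t₁^k < ⋯ < t_{2m}^k = 1} witnesses O_n(f_k) ≥ m (that is, f_k(t_{2i}^k) = p and f_k(t_{2i+1}^k) = q_n). If T ⊆ [0,1] is a subsequential limit of the sets T_k in the Hausdorff metric on compact subsets of [0,1], then T is a set of 2m+1 points witnessing O_n(f) ≥ m. -/
open unitInterval

noncomputable section

/-- The `n`-th circle of the Hawaiian earring: the circle of radius `1/n`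
centered at `(1/n, 0)` in the plane. -/
def heCircle (n : ℕ) : Set (ℝ × ℝ) :=
  {z : ℝ × ℝ | (z.1 - 1 / (n : ℝ)) ^ 2 + z.2 ^ 2 = (1 / (n : ℝ)) ^ 2}

/-- The Hawaiian earring `HE = ⋃_{n ≥ 1} X_n`. -/
def HEset : Set (ℝ × ℝ) := ⋃ n : ℕ, ⋃ _ : 1 ≤ n, heCircle n

lemma origin_mem_HEset : ((0, 0) : ℝ × ℝ) ∈ HEset := by
  refine Set.mem_iUnion.2 ⟨1, Set.mem_iUnion.2 ⟨le_refl 1, ?_⟩⟩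
  simp [heCircle]

/-- The basepoint `p = (0,0)` of the Hawaiian earring. -/
def hep : HEset := ⟨(0, 0), origin_mem_HEset⟩

/-- The point of the `n`-th circle at (counterclockwise) angle `θ` from the basepoint. -/
def circlePt (n : ℕ) (θ : ℝ) : ℝ × ℝ :=
  (1 / (n : ℝ) - Real.cos θ / n, -(Real.sin θ / n))

lemma circlePt_mem (n : ℕ) (θ : ℝ) : circlePt n θ ∈ HEset := by
  rcases Nat.eq_zero_or_pos n with h | h
  · subst h
    simpa [circlePt] using origin_mem_HEset
  · refine Set.mem_iUnion.2 ⟨n, Set.mem_iUnion.2 ⟨h, ?_⟩⟩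
    have hn : (n : ℝ) ≠ 0 := Nat.cast_ne_zero.2 h.ne'
    have hsc := Real.sin_sq_add_cos_sq θ
    simp only [heCircle, circlePt, Set.mem_setOf_eq]
    field_simp
    linear_combination hsc

/-- The standard loop `x_n` traversing the `n`-th circle of the Hawaiian earring
once counterclockwise.  (For `n = 0` this degenerates to the constant loop at `p`.) -/
def xLoop (n : ℕ) : Path hep hep where
  toFun := fun τ => ⟨circlePt n (2 * Real.pi * τ), circlePt_mem n _⟩
  continuous_toFun := by
    apply Continuous.subtype_mk
    have h1 : Continuous fun θ : ℝ => circlePt n θ := by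
      unfold circlePt; fun_prop
    exact h1.comp (by fun_prop)
  source' := by
    apply Subtype.ext
    simp [circlePt, hep]
  target' := by
    apply Subtype.ext
    simp [circlePt, hep, Real.cos_two_pi, Real.sin_two_pi]

attribute [local instance] Path.Homotopic.setoid

/-- The loop corresponding to a single letter `x_n` (if the Bool is `true`)
or `x_n⁻¹` (if the Bool is `false`). -/
def heLetter (l : ℕ × Bool) : Path hep hep :=
  if l.2 then xLoop l.1 else (xLoop l.1).symm

/-- The based loop corresponding to a finite word in the letters `x_n^{±1}`,
obtained by concatenating the letter loops. -/
def wordLoop (L : List (ℕ × Bool)) : Path hep hep :=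
  L.foldr (fun l acc => (heLetter l).trans acc) (Path.refl hep)

/-- The word `x_n x_k x_n⁻¹ x_k⁻¹`. -/
def commWord (n k : ℕ) : List (ℕ × Bool) := [(n, true), (k, true), (n, false), (k, false)]

/-- The loop `a(n,k)`, corresponding to the word `(x_n x_k x_n⁻¹ x_k⁻¹)^{n+k}`. -/
def aLoop (n k : ℕ) : Path hep hep :=
  wordLoop ((List.replicate (n + k) (commWord n k)).flatten)

/-- The loop `w(n,k)`, corresponding to the word `(x₁ x_k x₁⁻¹ x_k⁻¹)^{n}`. -/
def wLoop (n k : ℕ) : Path hep hep :=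
  wordLoop ((List.replicate n (commWord 1 k)).flatten)

/-- The fundamental group `π₁(HE, p)` as the set of path-homotopy classes of based
loops at `p`. -/
abbrev piHE : Type := Path.Homotopic.Quotient hep hep

/-- The quotient topology on `π₁(HE,p)` induced by the natural surjection from the
space of based loops (with the compact-open topology, i.e. uniform convergence). -/
instance : TopologicalSpace piHE :=
  inferInstanceAs (TopologicalSpace (Quotient (Path.Homotopic.setoid hep hep)))

/-- The natural quotient map `q : L(HE,p) → π₁(HE,p)`. -/
def qHE : Path hep hep → piHE := fun f => ⟦f⟧

/-- Multiplication on `π₁(HE,p)` by concatenation of path classes. -/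
def piMul : piHE × piHE → piHE := fun z => Path.Homotopic.Quotient.trans z.1 z.2

/-- Inversion on `π₁(HE,p)`, induced by reversal of loops. -/
def piInv : piHE → piHE :=
  Quotient.map Path.symm fun _ _ h => Nonempty.map Path.Homotopy.symm₂ h

/-- `IsOscWitness n f m t` says that the points `t 0 = 0 < t 1 < ⋯ < t (2m) = 1`
witness that the oscillation number `O_n(f)` is at least `m`: the even-indexed points
are sent by `f` to `p = (0,0)` and the odd-indexed points to `q_n = (2/n, 0)`. -/
def IsOscWitness (n : ℕ) (f : Path hep hep) (m : ℕ) (t : Fin (2 * m + 1) → I) : Prop :=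
  StrictMono t ∧ t ⟨0, by omega⟩ = 0 ∧ t ⟨2 * m, by omega⟩ = 1 ∧
    (∀ i : Fin (2 * m + 1), Even (i : ℕ) → ((f (t i) : ℝ × ℝ) = (0, 0))) ∧
    (∀ i : Fin (2 * m + 1), ¬ Even (i : ℕ) → ((f (t i) : ℝ × ℝ) = (2 / (n : ℝ), 0)))

/-- The oscillation number `O_n(f)`: the largest `m` admitting a witness
(`0` if there is none, and junk if there are arbitrarily large ones). -/
def OscNum (n : ℕ) (f : Path hep hep) : ℕ :=
  sSup {m : ℕ | ∃ t, IsOscWitness n f m t}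

/-- The finite wedge `Y_N = {p} ∪ X₁ ∪ ⋯ ∪ X_N`. -/
def Yset (N : ℕ) : Set (ℝ × ℝ) :=
  insert (0, 0) (⋃ n ∈ Set.Icc 1 N, heCircle n)

/-- The set `F` of pairs `([a(n,k)], [w(n,k)])` for `n, k ≥ 2`. -/
def Fset : Set (piHE × piHE) :=
  {z | ∃ n k : ℕ, 2 ≤ n ∧ 2 ≤ k ∧ z = (⟦aLoop n k⟧, ⟦wLoop n k⟧)}

/-- The set `A = M(F)` of products `[a(n,k)] ⬝ [w(n,k)]` for `n, k ≥ 2`. -/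
def Aset : Set piHE :=
  {c | ∃ n k : ℕ, 2 ≤ n ∧ 2 ≤ k ∧ c = Path.Homotopic.Quotient.trans ⟦aLoop n k⟧ ⟦wLoop n k⟧}

/-! Along a subsequence the witness tuples converge in the compact cube `I^(2m+1)`. Uniform
convergence carries the values `p` and `q_n` over to the limit tuple, which is monotone as a
limit of monotone tuples and has distinct consecutive entries because `p ≠ q_n`; hence it is
strictly monotone. The ranges of the tuples converge in the Hausdorff metric to its range,
which therefore is the closed set `T`. -/

open Filter Topology Metric Set

lemma Fin.strictMono_of_monotone_of_castSucc_ne {α : Type*} [PartialOrder α] {N : ℕ}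
    {s : Fin (N + 1) → α} (hs : Monotone s) (hne : ∀ i : Fin N, s i.castSucc ≠ s i.succ) :
    StrictMono s :=
  Fin.strictMono_iff_lt_succ.2 fun i => (hs i.castSucc_le_succ).lt_of_ne (hne i)

section HausdorffLimit

variable {X ι : Type*} [Fintype ι]

lemma hausdorffDist_range_le_dist [PseudoMetricSpace X] (u v : ι → X) :
    hausdorffDist (range u) (range v) ≤ dist u v :=
  hausdorffDist_le_of_mem_dist dist_nonneg
    (by rintro _ ⟨i, rfl⟩; exact ⟨v i, mem_range_self i, dist_le_pi_dist u v i⟩)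
    (by rintro _ ⟨i, rfl⟩
        exact ⟨u i, mem_range_self i, dist_comm u v ▸ dist_le_pi_dist v u i⟩)

lemma range_eq_of_tendsto_hausdorffDist [MetricSpace X] [Nonempty ι] {κ : Type*}
    {l : Filter κ} [l.NeBot] {u : κ → ι → X} {s : ι → X} (hu : Tendsto u l (𝓝 s))
    {T : Set X} (hTc : IsCompact T) (hTne : T.Nonempty)
    (hlim : Tendsto (fun k => hausdorffDist (range (u k)) T) l (𝓝 0)) :
    range s = T := by
  have hfin : ∀ v : ι → X, hausdorffEDist (range s) (range v) ≠ ⊤ := fun v =>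
    hausdorffEDist_ne_top_of_nonempty_of_bounded (range_nonempty s) (range_nonempty v)
      (finite_range s).isBounded (finite_range v).isBounded
  have hbound : ∀ k, hausdorffDist (range s) T ≤ dist s (u k) + hausdorffDist (range (u k)) T :=
    fun k => (hausdorffDist_triangle (hfin (u k))).trans
      (add_le_add_left (hausdorffDist_range_le_dist s (u k)) _)
  have hsmall : Tendsto (fun k => dist s (u k) + hausdorffDist (range (u k)) T) l (𝓝 0) := by
    simpa using ((tendsto_const_nhds (x := s)).dist hu).add hlim
  have hzero : hausdorffDist (range s) T = 0 :=
    le_antisymm (ge_of_tendsto' hsmall hbound) hausdorffDist_nonneg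
  have hfinT : hausdorffEDist (range s) T ≠ ⊤ :=
    hausdorffEDist_ne_top_of_nonempty_of_bounded (range_nonempty s) hTne
      (finite_range s).isBounded hTc.isBounded
  exact ((finite_range s).isClosed.hausdorffDist_zero_iff_eq hTc.isClosed hfinT).1 hzero

end HausdorffLimit

lemma isOscWitness_of_tendsto {n m : ℕ} (hn : 1 ≤ n) {ι : Type*} {l : Filter ι} [l.NeBot]
    {fs : ι → Path hep hep} {f : Path hep hep}
    (hconv : TendstoUniformly (fun k (τ : I) => (fs k τ : ℝ × ℝ))
      (fun τ => (f τ : ℝ × ℝ)) l)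
    {t : ι → Fin (2 * m + 1) → I} (ht : ∀ k, IsOscWitness n (fs k) m (t k))
    {s : Fin (2 * m + 1) → I} (hs : Tendsto t l (𝓝 s)) :
    IsOscWitness n f m s := by
  have hts (i) : Tendsto (fun k => t k i) l (𝓝 (s i)) := tendsto_pi_nhds.1 hs i
  have hval (i) : Tendsto (fun k => (fs k (t k i) : ℝ × ℝ)) l (𝓝 (f (s i))) :=
    hconv.tendsto_comp (continuous_subtype_val.comp f.continuous).continuousAt (hts i)
  have hp (i : Fin (2 * m + 1)) (hi : Even (i : ℕ)) : (f (s i) : ℝ × ℝ) = (0, 0) :=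
    (tendsto_const_nhds_iff.1 ((hval i).congr fun k => (ht k).2.2.2.1 i hi)).symm
  have hq (i : Fin (2 * m + 1)) (hi : ¬ Even (i : ℕ)) :
      (f (s i) : ℝ × ℝ) = (2 / (n : ℝ), 0) :=
    (tendsto_const_nhds_iff.1 ((hval i).congr fun k => (ht k).2.2.2.2 i hi)).symm
  have hpq : ((0 : ℝ), (0 : ℝ)) ≠ (2 / (n : ℝ), 0) := by
    have : (0 : ℝ) < n := by exact_mod_cast hn
    simp only [ne_eq, Prod.mk.injEq, and_true]
    exact (div_pos two_pos this).ne
  have hmono : Monotone s :=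
    monotone_of_frequently_monotone_of_tendsto (Frequently.of_forall fun k => (ht k).1.monotone)
      hts
  refine ⟨Fin.strictMono_of_monotone_of_castSucc_ne hmono fun i heq => ?_,
    (tendsto_const_nhds_iff.1 ((hts _).congr fun k => (ht k).2.1)).symm,
    (tendsto_const_nhds_iff.1 ((hts _).congr fun k => (ht k).2.2.1)).symm, hp, hq⟩
  rcases Nat.even_or_odd (i : ℕ) with he | ho
  · refine hpq ?_
    rw [← hp i.castSucc he, heq, hq i.succ (by simpa [Nat.even_add_one] using he)]
  · refine hpq ?_
    rw [← hp i.succ (by simpa [Nat.even_add_one] using ho), ← heq,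
      hq i.castSucc (Nat.not_even_iff_odd.2 ho)]

/-- If `fs k → f` uniformly, each `fs k` has a witness `t k` showing `O_n(fs k) ≥ m`,
and `T` is a subsequential limit of the witness sets in the Hausdorff metric on `[0,1]`,
then `T` is a set of `2m+1` points witnessing `O_n(f) ≥ m`. -/
theorem oscWitness_of_hausdorff_limit (n : ℕ) (hn : 1 ≤ n) (m : ℕ)
    (fs : ℕ → Path hep hep) (f : Path hep hep)
    (hconv : TendstoUniformly (fun k (τ : I) => ((fs k) τ : ℝ × ℝ))
      (fun τ => (f τ : ℝ × ℝ)) Filter.atTop)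
    (t : ∀ _ : ℕ, Fin (2 * m + 1) → I)
    (ht : ∀ k, IsOscWitness n (fs k) m (t k))
    (T : Set I) (hTc : IsCompact T) (hTne : T.Nonempty)
    (φ : ℕ → ℕ) (hφ : StrictMono φ)
    (hlim : Filter.Tendsto (fun l => Metric.hausdorffDist (Set.range (t (φ l))) T)
      Filter.atTop (nhds 0)) :
    ∃ s : Fin (2 * m + 1) → I, IsOscWitness n f m s ∧ Set.range s = T := by
  obtain ⟨s, -, ψ, hψ, hs⟩ :=
    isCompact_univ.tendsto_subseq (x := fun l => t (φ l)) fun _ => mem_univ _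
  have hsub : Tendsto (φ ∘ ψ) atTop atTop := (hφ.comp hψ).tendsto_atTop
  have hconv_sub : TendstoUniformly (fun l (τ : I) => (fs (φ (ψ l)) τ : ℝ × ℝ))
      (fun τ => (f τ : ℝ × ℝ)) atTop := fun u hu => hsub.eventually (hconv u hu)
  exact ⟨s, isOscWitness_of_tendsto hn hconv_sub (fun l => ht _) hs,
    range_eq_of_tendsto_hausdorffDist hs hTc hTne (hlim.comp hψ.tendsto_atTop)⟩

end
end

section
/- For every open set U ⊆ π₁(HE,p) (quotient topology) containing the class [P] of the constant loop, there exist N and K such that [a(n,k)] ∈ U for all n ≥ N and k ≥ K; moreover, for each fixed N, there exists K₂ such that [w(N,k)] ∈ U for all k ≥ K₂. -/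
open unitInterval

noncomputable section

attribute [local instance] Path.Homotopic.setoid

/-! The quotient map `q` is continuous, so it suffices to exhibit the loops in question as
uniform limits of loops whose class lies in `U`. Every point of `x_n` lies within `2/n` of `p`,
and word loops whose letters are pairwise uniformly `C`-close are uniformly `C`-close. Hence
`a(n,k)` converges uniformly to the constant loop as `n, k → ∞` (the bound is independent of the
number of letters), and `w(N,k)` converges uniformly to the loop obtained by replacing `x_k` with
the constant loop, which is homotopic to `(x₁ x₁⁻¹)^N` and hence null-homotopic. -/

open Filter Topology

section PathMetric

variable {X : Type*} [PseudoMetricSpace X] {x y z : X}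

theorem Path.tendsto_of_dist_le {ι : Type*} {l : Filter ι} {γ : ι → Path x y} {γ₀ : Path x y}
    {ε : ι → ℝ} (hε : Tendsto ε l (𝓝 0)) (h : ∀ i t, dist (γ i t) (γ₀ t) ≤ ε i) :
    Tendsto γ l (𝓝 γ₀) := by
  rw [nhds_induced, tendsto_comap_iff, tendsto_iff_dist_tendsto_zero]
  refine squeeze_zero (fun _ => dist_nonneg) (fun i => ?_) hε
  exact (ContinuousMap.dist_le (dist_nonneg.trans (h i 0))).2 (h i)

theorem Path.dist_trans_apply_le {γ₁ δ₁ : Path x y} {γ₂ δ₂ : Path y z} {C : ℝ}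
    (h₁ : ∀ t, dist (γ₁ t) (δ₁ t) ≤ C) (h₂ : ∀ t, dist (γ₂ t) (δ₂ t) ≤ C) (t : I) :
    dist ((γ₁.trans γ₂) t) ((δ₁.trans δ₂) t) ≤ C := by
  rw [Path.trans_apply, Path.trans_apply]
  split_ifs
  exacts [h₁ _, h₂ _]

end PathMetric

lemma xLoop_zero : xLoop 0 = Path.refl hep := by
  ext t <;> simp [xLoop, circlePt, hep] <;> rfl

lemma heLetter_zero (b : Bool) : heLetter (0, b) = Path.refl hep := by
  cases b <;> simp [heLetter, xLoop_zero]

lemma wordLoop_commWord_pow_succ (r n k : ℕ) :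
    wordLoop (List.replicate (r + 1) (commWord n k)).flatten =
      (xLoop n).trans ((xLoop k).trans ((xLoop n).symm.trans ((xLoop k).symm.trans
        (wordLoop (List.replicate r (commWord n k)).flatten)))) :=
  rfl

lemma wordLoop_commWord_zero_pow (r : ℕ) :
    wordLoop (List.replicate r (commWord 0 0)).flatten = Path.refl hep := by
  induction r with
  | zero => rfl
  | succ r ih => simp [wordLoop_commWord_pow_succ, ih, xLoop_zero, Path.refl_trans_refl]

lemma wordLoop_commWord_right_zero_pow_class (r n : ℕ) :
    (⟦wordLoop (List.replicate r (commWord n 0)).flatten⟧ : piHE) = ⟦Path.refl hep⟧ := by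
  induction r with
  | zero => rfl
  | succ r ih =>
    change Path.Homotopic.Quotient.mk _ = Path.Homotopic.Quotient.refl hep at ih ⊢
    rw [wordLoop_commWord_pow_succ, xLoop_zero]
    simp [ih]

lemma dist_circlePt_le (n : ℕ) (θ : ℝ) : dist (circlePt n θ) (0, 0) ≤ 2 / n := by
  rw [Prod.dist_eq, Real.dist_eq, Real.dist_eq, circlePt, sub_zero, sub_zero, abs_neg, ← sub_div,
    abs_div, abs_div, Nat.abs_cast, max_le_iff]
  constructor <;> gcongr
  · rw [abs_le]; constructor <;> linarith [Real.neg_one_le_cos θ, Real.cos_le_one θ]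
  · exact (Real.abs_sin_le_one θ).trans one_le_two

lemma dist_heLetter_le (l : ℕ × Bool) (t : I) : dist (heLetter l t) hep ≤ 2 / l.1 := by
  obtain ⟨n, _ | _⟩ := l <;> exact dist_circlePt_le n _

lemma dist_heLetter_heLetter_zero_le (n : ℕ) (b : Bool) (t : I) :
    dist (heLetter (n, b) t) (heLetter (0, b) t) ≤ 2 / n := by
  rw [heLetter_zero]
  exact dist_heLetter_le (n, b) t

lemma dist_wordLoop_le {C : ℝ} (hC : 0 ≤ C) {L L' : List (ℕ × Bool)}
    (h : List.Forall₂ (fun l l' => ∀ s, dist (heLetter l s) (heLetter l' s) ≤ C) L L') (t : I) :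
    dist (wordLoop L t) (wordLoop L' t) ≤ C := by
  induction h generalizing t with
  | nil => simpa [wordLoop] using hC
  | cons h _ ih => exact Path.dist_trans_apply_le h ih t

lemma dist_wordLoop_commWord_pow_le {r n k n' k' : ℕ} {C : ℝ}
    (hn : ∀ b s, dist (heLetter (n, b) s) (heLetter (n', b) s) ≤ C)
    (hk : ∀ b s, dist (heLetter (k, b) s) (heLetter (k', b) s) ≤ C) (t : I) :
    dist (wordLoop (List.replicate r (commWord n k)).flatten t)
      (wordLoop (List.replicate r (commWord n' k')).flatten t) ≤ C := by
  refine dist_wordLoop_le (dist_nonneg.trans (hn true 0)) ?_ t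
  induction r with
  | zero => exact List.Forall₂.nil
  | succ r ih =>
    simp only [List.replicate_succ, List.flatten_cons]
    exact List.rel_append (by simp [commWord, hn, hk]) ih

theorem tendsto_aLoop :
    Tendsto (fun p : ℕ × ℕ => aLoop p.1 p.2) (atTop ×ˢ atTop) (𝓝 (Path.refl hep)) := by
  have h2 := tendsto_const_div_atTop_nhds_zero_nat (2 : ℝ)
  refine Path.tendsto_of_dist_le (ε := fun p => 2 / (p.1 : ℝ) + 2 / p.2)
    (by simpa using (h2.comp tendsto_fst).add (h2.comp tendsto_snd)) fun p t => ?_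
  -- `xLoop 0` is the constant loop, so this word is the limit.
  rw [← wordLoop_commWord_zero_pow (p.1 + p.2)]
  refine dist_wordLoop_commWord_pow_le (fun b s => ?_) (fun b s => ?_) t
  · exact (dist_heLetter_heLetter_zero_le _ b s).trans (le_add_of_nonneg_right (by positivity))
  · exact (dist_heLetter_heLetter_zero_le _ b s).trans (le_add_of_nonneg_left (by positivity))

theorem tendsto_wordLoop_commWord_pow (r n : ℕ) :
    Tendsto (fun k => wordLoop (List.replicate r (commWord n k)).flatten) atTop
      (𝓝 (wordLoop (List.replicate r (commWord n 0)).flatten)) :=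
  Path.tendsto_of_dist_le (tendsto_const_div_atTop_nhds_zero_nat (2 : ℝ)) fun k t =>
    dist_wordLoop_commWord_pow_le (fun _ _ => by rw [dist_self]; positivity)
      (dist_heLetter_heLetter_zero_le k) t

/-- For every open `U ⊆ π₁(HE,p)` containing the class of the constant loop there
exist `N, K` with `[a(n,k)] ∈ U` for all `n ≥ N`, `k ≥ K`; moreover for each fixed
`N ≥ 2` there is `K₂` with `[w(N,k)] ∈ U` for all `k ≥ K₂`. -/
theorem mem_open_eventually (U : Set piHE) (hU : IsOpen U)
    (hP : (⟦Path.refl hep⟧ : piHE) ∈ U) :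
    (∃ N K : ℕ, ∀ n k : ℕ, 2 ≤ n → 2 ≤ k → N ≤ n → K ≤ k → (⟦aLoop n k⟧ : piHE) ∈ U) ∧
    (∀ N : ℕ, 2 ≤ N → ∃ K₂ : ℕ, ∀ k : ℕ, 2 ≤ k → K₂ ≤ k → (⟦wLoop N k⟧ : piHE) ∈ U) := by
  have hV : ∀ γ : Path hep hep, (⟦γ⟧ : piHE) ∈ U → ∀ᶠ δ in 𝓝 γ, (⟦δ⟧ : piHE) ∈ U :=
    fun γ hγ => continuous_quotient_mk'.continuousAt.preimage_mem_nhds (hU.mem_nhds hγ)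
  refine ⟨?_, fun N _ => ?_⟩
  · have ha := tendsto_aLoop.eventually (hV _ hP)
    rw [prod_atTop_atTop_eq] at ha
    obtain ⟨N, hN⟩ := eventually_atTop_prod_self'.1 ha
    exact ⟨N, N, fun n k _ _ hn hk => hN n hn k hk⟩
  · have hw := (tendsto_wordLoop_commWord_pow N 1).eventually
      (hV _ ((wordLoop_commWord_right_zero_pow_class N 1).symm ▸ hP))
    obtain ⟨K, hK⟩ := eventually_atTop.1 hw
    exact ⟨K, fun k _ hk => hK k hk⟩

end
end
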